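/- arXiv:0910.1360 — 2 statements merged into one kernel-verified Lean document; each statement's English description precedes it below -/
import Mathlib

section
/- Let {A_t : t ∈ T} be a tree of sets indexed by a tree T, with all A_t contained in a fixed set X. Then the map f: A(T) → P(X), defined by f(t) = A_t for t ∈ T and f(∞) = ∅, is continuous, where the power set P(X) is identified with the Cantor cube 2^X (sets identified with their characteristic functions). -/
open Filter Topology Set

universe u v

/-- A tree in the sense of the paper: a partial order with a minimal element `⊥`,
binary greatest lower bounds, and each set of predecessors `[0,t)` well ordered
(a linearly ordered, well-founded chain). -/
class TreeOrder (T : Type u) extends SemilatticeInf T, OrderBot T where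
  chain_lt : ∀ t : T, IsChain (· ≤ ·) {x : T | x < t}
  isWF_lt : ∀ t : T, Set.IsWF {x : T | x < t}

/-- The interval topology, generated by the intervals `(s,t]` (together with the
initial intervals `[0,t]`, which make the root an interior point of `[0,t]`). -/
def intervalTopology (T : Type u) [Preorder T] : TopologicalSpace T :=
  TopologicalSpace.generateFrom
    ({S : Set T | ∃ a b : T, S = Set.Ioc a b} ∪ {S : Set T | ∃ b : T, S = Set.Iic b})

instance TreeOrder.toTopologicalSpace (T : Type u) [TreeOrder T] : TopologicalSpace T :=
  intervalTopology T

/-- A tree of sets indexed by a tree `T`. -/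
structure IsTreeOfSets {T : Type u} [PartialOrder T] {X : Type v} (A : T → Set X) : Prop where
  subset_of_le : ∀ s t : T, t ≤ s → A s ⊆ A t
  disjoint_of_incomp : ∀ s t : T, ¬ s ≤ t → ¬ t ≤ s → A s ∩ A t = ∅
  iInter_chain : ∀ C : Set T, C.Nonempty → IsChain (· ≤ ·) C → ∀ t : T, IsLUB C t →
    ⋂ s ∈ C, A s = A t
  iInter_unbounded : ∀ C : Set T, C.Nonempty → IsChain (· ≤ ·) C → ¬ BddAbove C →
    ⋂ s ∈ C, A s = ∅

/-- The map sending `t ∈ T` to the characteristic function of `A t` (an element of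
the Cantor cube `2^X`) and `∞` to the characteristic function of `∅`. -/
noncomputable def treeSetsChar {T : Type u} {X : Type v} (A : T → Set X) :
    OnePoint T → X → Bool :=
  fun p x => @decide (∃ t : T, p = (t : OnePoint T) ∧ x ∈ A t) (Classical.propDecidable _)

/-!
Fix `x ∈ X`. The indices `t` with `x ∈ A t` form a chain (sets at incomparable nodes are
disjoint), which is bounded (an unbounded chain has empty intersection), so it has a supremum
`m`; continuity at the supremum gives `x ∈ A m`, hence the chain is exactly `[0, m]`. In the
interval topology `[0, m]` is open and closed, and it is compact by Alexander's subbasis theorem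
and well-founded induction on `m`; so its image in `A(T)` is clopen.
-/

namespace TreeOrder

variable {T : Type u} [TreeOrder T]

-- A strictly descending sequence would, from its second term on, lie in `[0, f 0)`.
instance : WellFoundedLT T := by
  refine Set.isWF_univ_iff.mp (Set.isWF_iff_no_descending_seq.mpr fun f hf _ => ?_)
  refine Set.isWF_iff_no_descending_seq.mp (isWF_lt (f 0)) (fun n => f (n + 1))
    (hf.comp_strictMono (strictMono_id.add_const 1)) fun n => hf (Nat.succ_pos n)

theorem isChain_Iic (m : T) : IsChain (· ≤ ·) (Iic m) := by
  intro a ha b hb hab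
  rcases (ha : a ≤ m).eq_or_lt with rfl | ha'
  · exact Or.inr hb
  rcases (hb : b ≤ m).eq_or_lt with rfl | hb'
  · exact Or.inl ha
  exact chain_lt m ha' hb' hab

theorem le_or_lt_of_le_of_le {a b m : T} (ha : a ≤ m) (hb : b ≤ m) : b ≤ a ∨ a < b := by
  rcases (isChain_Iic m).total hb ha with h | h
  · exact Or.inl h
  · exact (eq_or_lt_of_le h).imp ge_of_eq id

theorem exists_isLUB {B : Set T} (hB : BddAbove B) : ∃ m, IsLUB B m := by
  obtain ⟨m, hm, hmin⟩ := wellFounded_lt.has_min (upperBounds B) hB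
  refine ⟨m, hm, fun u hu => ?_⟩
  have hinf : u ⊓ m ∈ upperBounds B := fun s hs => le_inf (hu hs) (hm hs)
  have : u ⊓ m = m := inf_le_right.eq_of_not_lt (hmin _ hinf)
  exact this ▸ inf_le_left

theorem isOpen_Ioc (a b : T) : IsOpen (Ioc a b) :=
  TopologicalSpace.GenerateOpen.basic _ (Or.inl ⟨a, b, rfl⟩)

theorem isOpen_Iic (b : T) : IsOpen (Iic b) :=
  TopologicalSpace.GenerateOpen.basic _ (Or.inr ⟨b, rfl⟩)

theorem isClosed_Iic (m : T) : IsClosed (Iic m) := by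
  refine isOpen_compl_iff.mp (isOpen_iff_forall_mem_open.mpr fun t ht => ?_)
  refine ⟨Ioc (t ⊓ m) t, fun y hy hym => hy.1.not_ge (le_inf hy.2 hym), isOpen_Ioc _ _, ?_,
    le_rfl⟩
  exact inf_le_left.lt_of_ne fun h => ht (h ▸ inf_le_right)

theorem isCompact_Iic (m : T) : IsCompact (Iic m) := by
  induction m using WellFoundedLT.induction with
  | _ y ih =>
  refine isCompact_generateFrom rfl fun P hPS hcover => ?_
  obtain ⟨S, hSP, hyS⟩ := hcover (le_refl y)
  rcases hPS hSP with ⟨a, b, rfl⟩ | ⟨b, rfl⟩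
  -- `(a, b] ∋ y` covers the part of `[0, y]` above `a`; the rest is `[0, a]`, compact by induction.
  · have hPopen : ∀ U ∈ P, IsOpen U := fun U hU =>
      TopologicalSpace.GenerateOpen.basic _ (hPS hU)
    obtain ⟨Q, hQP, hQ, haQ⟩ := (ih a hyS.1).elim_finite_subcover_image (c := id) hPopen
      (fun z hz => sUnion_eq_biUnion ▸ hcover (hz.trans hyS.1.le))
    refine ⟨insert (Ioc a b) Q, insert_subset hSP hQP, hQ.insert _, fun z hz => ?_⟩
    rcases le_or_lt_of_le_of_le hyS.1.le hz with hza | haz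
    · obtain ⟨U, hUQ, hzU⟩ := mem_iUnion₂.mp (haQ hza)
      exact ⟨U, mem_insert_of_mem _ hUQ, hzU⟩
    · exact ⟨_, mem_insert _ _, haz, (hz : z ≤ y).trans hyS.2⟩
  · exact ⟨{Iic b}, singleton_subset_iff.mpr hSP, finite_singleton _,
      fun z hz => ⟨_, rfl, (hz : z ≤ y).trans hyS⟩⟩

theorem isClopen_image_coe_Iic (m : T) : IsClopen (((↑) : T → OnePoint T) '' Iic m) :=
  ⟨OnePoint.isClosed_image_coe.mpr ⟨isClosed_Iic m, isCompact_Iic m⟩,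
    OnePoint.isOpen_image_coe.mpr (isOpen_Iic m)⟩

end TreeOrder

namespace IsTreeOfSets

variable {T : Type u} {X : Type v} {A : T → Set X}

theorem isChain_setOf_mem [PartialOrder T] (hA : IsTreeOfSets A) (x : X) :
    IsChain (· ≤ ·) {t | x ∈ A t} := by
  intro s hs t ht _
  by_contra! hst
  exact (hA.disjoint_of_incomp s t hst.1 hst.2).subset ⟨hs, ht⟩

theorem setOf_mem_eq_empty_or_Iic [TreeOrder T] (hA : IsTreeOfSets A) (x : X) :
    {t | x ∈ A t} = ∅ ∨ ∃ m, {t | x ∈ A t} = Iic m := by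
  set B := {t | x ∈ A t}
  rcases B.eq_empty_or_nonempty with hB | hB
  · exact Or.inl hB
  have hx : x ∈ ⋂ s ∈ B, A s := mem_iInter₂.mpr fun _ hs => hs
  have hBdd : BddAbove B := by
    by_contra hunb
    simp [hA.iInter_unbounded B hB (hA.isChain_setOf_mem x) hunb] at hx
  obtain ⟨m, hm⟩ := TreeOrder.exists_isLUB hBdd
  have hxm : x ∈ A m := hA.iInter_chain B hB (hA.isChain_setOf_mem x) m hm ▸ hx
  exact Or.inr ⟨m, Subset.antisymm (fun _ ht => hm.1 ht) fun t ht => hA.subset_of_le m t ht hxm⟩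

end IsTreeOfSets

theorem treeSetsChar_apply_eq_boolIndicator {T : Type u} {X : Type v} (A : T → Set X) (x : X) :
    (fun p => treeSetsChar A p x) = (((↑) : T → OnePoint T) '' {t | x ∈ A t}).boolIndicator := by
  funext p
  have hmem : p ∈ ((↑) : T → OnePoint T) '' {t | x ∈ A t} ↔ ∃ t : T, p = t ∧ x ∈ A t := by
    simp only [mem_image, mem_ofPred_eq, eq_comm, and_comm]
  simp [treeSetsChar, Set.boolIndicator, hmem]

/-- For a tree of sets `{A_t : t ∈ T}`, the map `t ↦ A_t`, `∞ ↦ ∅`, from `A(T)` to the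
Cantor cube `2^X`, is continuous. -/
theorem continuous_treeSetsChar {T : Type u} [TreeOrder T] {X : Type v} (A : T → Set X)
    (hA : IsTreeOfSets A) : Continuous (treeSetsChar A) := by
  refine continuous_pi fun x => ?_
  rw [treeSetsChar_apply_eq_boolIndicator, continuous_boolIndicator_iff_isClopen]
  rcases hA.setOf_mem_eq_empty_or_Iic x with h | ⟨m, h⟩
  · rw [h, image_empty]
    exact isClopen_empty
  · exact h ▸ TreeOrder.isClopen_image_coe_Iic m
end

section
/- There exists a 2-fibered Rosenthal compactification K₀ of the tree wQ whose remainder K₀ \ wQ is homeomorphic to the Cantor set. -/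
open Filter Topology Set

universe u v

/-- A real-valued function is of Baire class one if it is a pointwise limit of a
sequence of continuous functions. -/
def BaireClassOne {P : Type*} [TopologicalSpace P] (f : P → ℝ) : Prop :=
  ∃ g : ℕ → P → ℝ, (∀ n, Continuous (g n)) ∧
    ∀ x, Filter.Tendsto (fun n => g n x) Filter.atTop (nhds (f x))

/-- A Rosenthal compact: a compact space homeomorphic to a subspace of the space
`B₁(P)` of Baire class one functions on a Polish space `P`, with the pointwise topology. -/
def IsRosenthal (K : Type u) [TopologicalSpace K] : Prop :=
  CompactSpace K ∧
    ∃ (P : Type) (_ : TopologicalSpace P) (_ : PolishSpace P) (F : Set (P → ℝ)),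
      (∀ f ∈ F, BaireClassOne f) ∧ Nonempty (K ≃ₜ F)

/-- A compact space `K` is `n`-fibered if there is a continuous map onto a second
countable space all of whose fibers have at most `n` points. -/
def NFibered (n : ℕ) (K : Type u) [TopologicalSpace K] : Prop :=
  ∃ (S : Type u) (_ : TopologicalSpace S) (_ : SecondCountableTopology S) (f : K → S),
    Continuous f ∧ ∀ y : S, (f ⁻¹' {y}).Finite ∧ (f ⁻¹' {y}).ncard ≤ n

/-- `s` is an initial segment of `t` (as subsets of `ℚ`): `s ⊆ t` and every element
of `t \ s` lies above every element of `s`. -/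
def QInitSeg (s t : Set ℚ) : Prop :=
  s ⊆ t ∧ ∀ x ∈ s, ∀ y ∈ t, y ∉ s → x ≤ y

theorem QInitSeg.refl (s : Set ℚ) : QInitSeg s s :=
  ⟨subset_rfl, fun _ _ y hy hyn => absurd hy hyn⟩

theorem QInitSeg.trans' {s t u : Set ℚ} (h1 : QInitSeg s t) (h2 : QInitSeg t u) :
    QInitSeg s u := by
  refine ⟨h1.1.trans h2.1, fun x hx y hy hyn => ?_⟩
  by_cases hyt : y ∈ t
  · exact h1.2 x hx y hyt hyn
  · exact h2.2 x (h1.1 hx) y hy hyt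

theorem QInitSeg.antisymm' {s t : Set ℚ} (h1 : QInitSeg s t) (h2 : QInitSeg t s) : s = t :=
  Set.Subset.antisymm h1.1 h2.1

/-- The tree `wℚ` of all well-ordered subsets of `ℚ`. -/
def wQ : Type := {s : Set ℚ // s.IsWF}

/-- `wℚ` is ordered by "being an initial segment". -/
instance : PartialOrder wQ where
  le s t := QInitSeg s.1 t.1
  le_refl s := QInitSeg.refl s.1
  le_trans _ _ _ h1 h2 := QInitSeg.trans' h1 h2
  le_antisymm _ _ h1 h2 := Subtype.ext (QInitSeg.antisymm' h1 h2)

instance : TopologicalSpace wQ := intervalTopology wQ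

/-!
Send `s ∈ wℚ` to `(χ_s, χ_{↑s}) ∈ 2^ℚ × 2^wℚ`, where `↑s` is the cone of extensions of `s`, and
let `K₀` be the closure of the image. A point of `K₀` whose second coordinate is `1` at some `t`
lies in the closure of the image of the compact chain `Iic t`, hence in the image itself, while
every `(g, 0)` is a limit of finite segments. So the remainder is `2^ℚ × {0}`, a Cantor set, and
the first projection is at most two-to-one on `K₀`.

`K₀` is Rosenthal because a point `p` is coded by the indicator of a closed subset of the Polish
space `2^ℚ ⊕ ℕ`: the `x` whose largest well-ordered initial segment `t` has `p.2 t = 1` (for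
`p = (χ_s, χ_{↑s})` these are the `x` having `s` as an initial segment), together with the `n`
at which `p.1` is `1` on the `n`-th rational. Indicators of closed sets are of Baire class one,
and the coding is continuous and injective on the compact space `K₀`.
-/

theorem IsClosed.baireClassOne_indicator {P : Type*} [TopologicalSpace P]
    [TopologicalSpace.PseudoMetrizableSpace P] {S : Set P} (hS : IsClosed S) :
    BaireClassOne (S.indicator 1) := by
  let := TopologicalSpace.pseudoMetrizableSpacePseudoMetric P
  have hδ : ∀ n : ℕ, (0 : ℝ) < 1 / (n + 1) := fun n => Nat.one_div_pos_of_nat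
  have hlim := thickenedIndicator_tendsto_indicator_closure hδ
    tendsto_one_div_add_atTop_nhds_zero_nat S
  rw [hS.closure_eq, tendsto_pi_nhds] at hlim
  refine ⟨fun n p => thickenedIndicator (hδ n) S p,
    fun n => NNReal.continuous_coe.comp (thickenedIndicator (hδ n) S).continuous, fun p => ?_⟩
  have := (NNReal.continuous_coe.tendsto _).comp (hlim p)
  rwa [Function.comp_def, NNReal.coe_indicator, NNReal.coe_one] at this

theorem IsRosenthal.of_continuous_injective {K : Type u} [TopologicalSpace K] [CompactSpace K]
    {P : Type} [TopologicalSpace P] [PolishSpace P] {Φ : K → P → ℝ} (hΦ : Continuous Φ)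
    (hinj : Function.Injective Φ) (hB : ∀ k, BaireClassOne (Φ k)) : IsRosenthal K :=
  ⟨‹_›, P, _, ‹_›, range Φ, forall_mem_range.2 hB,
    ⟨(hΦ.isClosedEmbedding hinj).isEmbedding.toHomeomorph⟩⟩

theorem IsRosenthal.of_isClosed_setOf {K : Type u} [TopologicalSpace K] [CompactSpace K]
    {P : Type} [TopologicalSpace P] [PolishSpace P] {c : K → P → Bool} (hc : Continuous c)
    (hinj : Function.Injective c) (hclosed : ∀ k, IsClosed {z | c k z = true}) :
    IsRosenthal K := by
  refine .of_continuous_injective (Φ := fun k => {z | c k z = true}.indicator 1)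
    (continuous_pi fun z => ?_) (fun k k' h => hinj ?_) fun k => (hclosed k).baireClassOne_indicator
  · simp only [indicator_apply, mem_ofPred_eq, Pi.one_apply]
    exact (continuous_of_discreteTopology
      (f := fun b : Bool => if b = true then (1 : ℝ) else 0)).comp ((continuous_apply z).comp hc)
  · have hset := indicator_one_inj ℝ h
    funext z
    exact Bool.eq_iff_iff.2 (Set.ext_iff.1 hset z)

theorem NFibered.two_of_injOn {K S : Type u} [TopologicalSpace K] [TopologicalSpace S]
    [SecondCountableTopology S] {f : K → S} (hf : Continuous f) {R : Set K}
    (hR : InjOn f R) (hRc : InjOn f Rᶜ) : NFibered 2 K := by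
  refine ⟨S, _, ‹_›, f, hf, fun y => ?_⟩
  have hsub : ∀ {T : Set K}, InjOn f T → (f ⁻¹' {y} ∩ T).Subsingleton :=
    fun hT _ ha _ hb => hT ha.2 hb.2 (ha.1.trans hb.1.symm)
  have hle : ∀ {T : Set K}, InjOn f T → (f ⁻¹' {y} ∩ T).ncard ≤ 1 :=
    fun hT => (ncard_le_one (hsub hT).finite).2 fun _ ha _ hb => hsub hT ha hb
  rw [← inter_union_compl (f ⁻¹' {y}) R]
  exact ⟨(hsub hR).finite.union (hsub hRc).finite,
    (ncard_union_le _ _).trans (add_le_add (hle hR) (hle hRc))⟩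

theorem QInitSeg.of_subset {s t x : Set ℚ} (hs : QInitSeg s x) (ht : QInitSeg t x)
    (hst : s ⊆ t) : QInitSeg s t :=
  ⟨hst, fun p hp q hq hqn => hs.2 p hp q (ht.1 hq) hqn⟩

theorem QInitSeg.subset_or_subset {s t x : Set ℚ} (hs : QInitSeg s x) (ht : QInitSeg t x) :
    s ⊆ t ∨ t ⊆ s := by
  refine or_iff_not_imp_left.2 fun h q hq => ?_
  obtain ⟨p, hps, hpt⟩ := not_subset.1 h
  by_contra hqs
  exact hpt (le_antisymm (hs.2 p hps q (ht.1 hq) hqs) (ht.2 q hq p (hs.1 hps) hpt) ▸ hq)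

theorem isClosed_setOf_qInitSeg (s : Set ℚ) :
    IsClosed {x : ℚ → Bool | QInitSeg s (x ⁻¹' {true})} := by
  have hset : {x : ℚ → Bool | QInitSeg s (x ⁻¹' {true})} =
      ⋂ q, (fun x => x q) ⁻¹' {b | (q ∈ s → b = true) ∧ (b = true → q ∉ s → ∀ p ∈ s, p ≤ q)} := by
    ext x
    simp only [QInitSeg, mem_ofPred_eq, mem_iInter, mem_preimage, forall_and]
    exact ⟨fun h => ⟨h.1, fun q hq hqs p hp => h.2 p hp q hq hqs⟩,
      fun h => ⟨h.1, fun p hp q hq hqs => h.2 q hq hqs p hp⟩⟩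
  rw [hset]
  exact isClosed_iInter fun q => (isClosed_discrete _).preimage (continuous_apply q)

namespace wQ

theorem le_total_of_le {x y b : wQ} (hx : x ≤ b) (hy : y ≤ b) : x ≤ y ∨ y ≤ x :=
  (QInitSeg.subset_or_subset hx hy).imp (QInitSeg.of_subset hx hy) (QInitSeg.of_subset hy hx)

theorem lt_iff_not_le_of_le {a s c : wQ} (ha : a ≤ c) (hs : s ≤ c) : a < s ↔ ¬s ≤ a :=
  ⟨fun h => h.not_ge, fun h => lt_of_le_not_ge ((le_total_of_le ha hs).resolve_right h) h⟩

def trunc (s : wQ) (p : ℚ) : wQ := ⟨s.1 ∩ Iio p, s.2.mono inter_subset_left⟩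

theorem trunc_lt {s : wQ} {p : ℚ} (hp : p ∈ s.1) : trunc s p < s := by
  refine lt_of_le_of_ne ⟨inter_subset_left, fun a ha b hb hbn => ?_⟩ fun h => ?_
  · exact ha.2.le.trans (not_lt.1 fun hlt => hbn ⟨hb, hlt⟩)
  · exact lt_irrefl p (congrArg Subtype.val h ▸ hp : p ∈ (trunc s p).1).2

theorem mem_of_trunc_lt {s x : wQ} {p : ℚ} (hp : p ∈ s.1) (h₁ : trunc s p < x) (h₂ : x ≤ s) :
    p ∈ x.1 := by
  obtain ⟨w, hwx, hwt⟩ : ∃ w ∈ x.1, w ∉ (trunc s p).1 := not_subset.1 fun hsub =>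
    h₁.not_ge (QInitSeg.of_subset h₂ (trunc_lt hp).le hsub)
  have hpw : p ≤ w := not_lt.1 fun hlt => hwt ⟨h₂.1 hwx, hlt⟩
  by_contra hpx
  exact hpx (le_antisymm (h₂.2 w hwx p hp hpx) hpw ▸ hwx)

theorem isOpen_Iic (b : wQ) : IsOpen (Iic b) := .basic _ (Or.inr ⟨b, rfl⟩)

theorem isOpen_Ioc (a b : wQ) : IsOpen (Ioc a b) := .basic _ (Or.inl ⟨a, b, rfl⟩)

theorem isClopen_setOf_mem (q : ℚ) : IsClopen {s : wQ | q ∈ s.1} := by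
  refine ⟨isOpen_compl_iff.1 <| isOpen_iff_forall_mem_open.2 fun s hs => ?_,
    isOpen_iff_forall_mem_open.2 fun s hs => ?_⟩
  · exact ⟨Iic s, fun x (hx : x ≤ s) hq => hs (hx.1 hq), isOpen_Iic s, self_mem_Iic⟩
  · exact ⟨Ioc (trunc s q) s, fun x hx => mem_of_trunc_lt hs hx.1 hx.2, isOpen_Ioc _ _,
      trunc_lt hs, le_rfl⟩

theorem isClosed_Iic (b : wQ) : IsClosed (Iic b) := by
  refine isOpen_compl_iff.1 <| isOpen_iff_forall_mem_open.2 fun x (hx : ¬x ≤ b) => ?_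
  by_cases hsub : x.1 ⊆ b.1
  · obtain ⟨p, hp, y, hy, hyx, hyp⟩ : ∃ p ∈ x.1, ∃ y ∈ b.1, y ∉ x.1 ∧ y < p := by
      by_contra! h
      exact hx ⟨hsub, h⟩
    refine ⟨{s | p ∈ s.1} ∩ {s | y ∈ s.1}ᶜ, ?_,
      (isClopen_setOf_mem p).isOpen.inter (isClopen_setOf_mem y).compl.isOpen, hp, hyx⟩
    rintro s ⟨hps, hys⟩ (hsb : s ≤ b)
    exact hyp.not_ge (hsb.2 p hps y hy hys)
  · obtain ⟨q, hqx, hqb⟩ := not_subset.1 hsub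
    exact ⟨{s | q ∈ s.1}, fun s hs (hsb : s ≤ b) => hqb (hsb.1 hs),
      (isClopen_setOf_mem q).isOpen, hqx⟩


def ultrafilterLim (U : Ultrafilter wQ) (b : wQ) : wQ :=
  ⟨{p ∈ b.1 | {x : wQ | p ∈ x.1} ∈ U}, b.2.mono fun _ hp => hp.1⟩

section ultrafilterLim

variable {U : Ultrafilter wQ} {b : wQ}

theorem ultrafilterLim_le (hU : Iic b ∈ U) : ultrafilterLim U b ≤ b := by
  refine ⟨fun p hp => hp.1, fun p hp y hy hyn => not_lt.1 fun hyp => hyn ⟨hy, ?_⟩⟩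
  refine U.mem_of_superset (U.inter_mem hU hp.2) fun x ⟨(hxb : x ≤ b), hpx⟩ => ?_
  by_contra hyx
  exact hyp.not_ge (hxb.2 p hpx y hy hyx)

theorem Iic_ultrafilterLim_mem (hU : Iic b ∈ U) : Iic (ultrafilterLim U b) ∈ U := by
  set l := ultrafilterLim U b
  have hdiff : ∀ y : wQ, y ≤ b → ¬y ≤ l → ∃ v ∈ y.1, v ∉ l.1 := fun y hyb hyl =>
    not_subset.1 fun h => hyl (QInitSeg.of_subset hyb (ultrafilterLim_le hU) h)
  by_contra hl
  have hU' : Iic b ∩ (Iic l)ᶜ ∈ U := U.inter_mem hU (U.compl_mem_iff_notMem.2 hl)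
  obtain ⟨x, hxb, hxl⟩ := U.nonempty_of_mem hU'
  obtain ⟨w, hwx, hwl⟩ := hdiff x hxb hxl
  have hwf : (b.1 \ l.1).IsWF := b.2.mono sdiff_subset
  have hne : (b.1 \ l.1).Nonempty := ⟨w, hxb.1 hwx, hwl⟩
  set q₀ := hwf.min hne
  have hq₀ : q₀ ∈ b.1 \ l.1 := hwf.min_mem hne
  have hsub : Iic b ∩ (Iic l)ᶜ ⊆ {y : wQ | q₀ ∈ y.1} := by
    rintro y ⟨(hyb : y ≤ b), hyl⟩
    obtain ⟨v, hvy, hvl⟩ := hdiff y hyb hyl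
    by_contra hq₀y
    have hvq : v ≤ q₀ := hyb.2 v hvy q₀ hq₀.1 hq₀y
    exact hq₀y (le_antisymm hvq (hwf.min_le hne ⟨hyb.1 hvy, hvl⟩) ▸ hvy)
  exact hq₀.2 ⟨hq₀.1, U.mem_of_superset hU' hsub⟩

theorem le_nhds_ultrafilterLim (hU : Iic b ∈ U) : ↑U ≤ 𝓝 (ultrafilterLim U b) := by
  set l := ultrafilterLim U b
  rw [show 𝓝 l = _ from TopologicalSpace.nhds_generateFrom]
  refine le_iInf₂ fun S ⟨hlS, hS⟩ => le_principal_iff.2 ?_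
  rcases hS with ⟨a, c, rfl⟩ | ⟨c, rfl⟩
  · obtain ⟨hal, hlc⟩ := hlS
    obtain ⟨p, hpl, hpa⟩ := not_subset.1 fun h =>
      hal.ne (Subtype.ext (Subset.antisymm hal.le.1 h))
    refine U.mem_of_superset (U.inter_mem (Iic_ultrafilterLim_mem hU) hpl.2) ?_
    rintro x ⟨(hxl : x ≤ l), hpx⟩
    exact ⟨(lt_iff_not_le_of_le hal.le hxl).2 fun hxa => hpa (hxa.1 hpx), hxl.trans hlc⟩
  · exact U.mem_of_superset (Iic_ultrafilterLim_mem hU) fun x (hx : x ≤ l) => hx.trans hlS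

end ultrafilterLim

theorem isCompact_Iic (b : wQ) : IsCompact (Iic b) :=
  isCompact_iff_ultrafilter_le_nhds'.2 fun U hU =>
    ⟨ultrafilterLim U b, ultrafilterLim_le hU, le_nhds_ultrafilterLim hU⟩

def wfPrefix (x : Set ℚ) : wQ :=
  ⟨{q ∈ x | (x ∩ Iic q).IsWF}, by
    refine isWF_iff_no_descending_seq.2 fun f hf hfx => ?_
    refine isWF_iff_no_descending_seq.1 (hfx 0).2 f hf fun n => ⟨(hfx n).1, ?_⟩
    exact hf.antitone (Nat.zero_le n)⟩

theorem le_wfPrefix_iff {s : wQ} {x : Set ℚ} : s ≤ wfPrefix x ↔ QInitSeg s.1 x := by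
  have hprefix : QInitSeg (wfPrefix x).1 x := by
    refine ⟨fun q hq => hq.1, fun p hp y hy hyn => not_lt.1 fun hyp => hyn ⟨hy, ?_⟩⟩
    exact hp.2.mono (inter_subset_inter_right x (Iic_subset_Iic.2 hyp.le))
  refine ⟨fun h => QInitSeg.trans' h hprefix, fun h => QInitSeg.of_subset h hprefix ?_⟩
  refine fun q hq => ⟨h.1 hq, s.2.mono fun y ⟨hyx, hyq⟩ => ?_⟩
  by_contra hys
  exact hys (le_antisymm hyq (h.2 q hq y hyx hys) ▸ hq)

theorem wfPrefix_val (t : wQ) : wfPrefix t.1 = t :=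
  le_antisymm (le_wfPrefix_iff.1 le_rfl) (le_wfPrefix_iff.2 (QInitSeg.refl t.1))


abbrev Cube : Type := (ℚ → Bool) × (wQ → Bool)

noncomputable def embed (s : wQ) : Cube :=
  (fun q => {x : wQ | q ∈ x.1}.boolIndicator s, fun t => (Iic t).boolIndicator s)

theorem embed_fst_apply (s : wQ) (q : ℚ) : (embed s).1 q = true ↔ q ∈ s.1 :=
  ({x : wQ | q ∈ x.1}.mem_iff_boolIndicator s).symm

theorem embed_snd_apply (s t : wQ) : (embed s).2 t = true ↔ s ≤ t :=
  ((Iic t).mem_iff_boolIndicator s).symm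

theorem injective_fst_embed : Function.Injective fun s => (embed s).1 := fun s t h =>
  Subtype.ext <| Set.ext fun q => by
    rw [← embed_fst_apply, ← embed_fst_apply]
    exact Bool.eq_iff_iff.1 (congrFun h q)

theorem continuous_embed : Continuous embed :=
  (continuous_pi fun q => (continuous_boolIndicator_iff_isClopen _).2 (isClopen_setOf_mem q)).prodMk
    (continuous_pi fun t =>
      (continuous_boolIndicator_iff_isClopen _).2 ⟨isClosed_Iic t, isOpen_Iic t⟩)

theorem isOpen_setOf_snd_apply (t : wQ) (b : Bool) : IsOpen {p : Cube | p.2 t = b} :=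
  (isOpen_discrete {b}).preimage (by fun_prop : Continuous fun p : Cube => p.2 t)

theorem preimage_embed_setOf_snd_true (t : wQ) : embed ⁻¹' {p | p.2 t = true} = Iic t :=
  Set.ext fun s => embed_snd_apply s t

theorem isEmbedding_embed : IsEmbedding embed := by
  refine ⟨⟨le_antisymm (continuous_iff_le_induced.1 continuous_embed) (le_generateFrom ?_)⟩,
    injective_fst_embed.of_comp⟩
  rintro S (⟨a, c, rfl⟩ | ⟨c, rfl⟩) <;> rw [isOpen_induced_iff]
  · by_cases hac : a ≤ c
    · refine ⟨{p | p.2 c = true} ∩ {p | p.2 a = false},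
        (isOpen_setOf_snd_apply c true).inter (isOpen_setOf_snd_apply a false), Set.ext fun s => ?_⟩
      simp only [mem_preimage, mem_inter_iff, mem_ofPred_eq, ← Bool.not_eq_true, embed_snd_apply,
        mem_Ioc]
      exact ⟨fun ⟨hsc, hsa⟩ => ⟨(lt_iff_not_le_of_le hac hsc).2 hsa, hsc⟩,
        fun ⟨has, hsc⟩ => ⟨hsc, (lt_iff_not_le_of_le hac hsc).1 has⟩⟩
    · exact ⟨∅, isOpen_empty, by rw [preimage_empty, Ioc_eq_empty fun h => hac h.le]⟩
  · exact ⟨_, isOpen_setOf_snd_apply c true, preimage_embed_setOf_snd_true c⟩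

-- The point `-(n + 1)` eventually leaves every `t : wQ`, so `embed (approx g n)` tends to `(g, 0)`.
def approx (g : ℚ → Bool) (n : ℕ) : wQ :=
  ⟨insert (-(n + 1 : ℚ)) {q | g q = true ∧ Denumerable.eqv ℚ q < n},
    ((((finite_Iio n).preimage (Denumerable.eqv ℚ).injective.injOn).subset
      fun _ hq => hq.2).insert _).isWF⟩

theorem eventually_neg_notMem (t : wQ) : ∀ᶠ n : ℕ in atTop, -(n + 1 : ℚ) ∉ t.1 := by
  rcases t.1.eq_empty_or_nonempty with h | h
  · simp [h]
  obtain ⟨N, hN⟩ := exists_nat_gt (-t.2.min h)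
  filter_upwards [eventually_ge_atTop N] with n hn hmem
  have hmin := t.2.min_le h hmem
  have : (N : ℚ) ≤ n := by exact_mod_cast hn
  linarith

theorem tendsto_embed_approx (g : ℚ → Bool) :
    Tendsto (fun n => embed (approx g n)) atTop (𝓝 (g, fun _ => false)) := by
  refine .prodMk_nhds (tendsto_pi_nhds.2 fun q => tendsto_const_nhds.congr' ?_)
    (tendsto_pi_nhds.2 fun t => tendsto_const_nhds.congr' ?_)
  · obtain ⟨N, hN⟩ := exists_nat_gt (-q)
    filter_upwards [eventually_ge_atTop N, eventually_gt_atTop (Denumerable.eqv ℚ q)] with n hn hq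
    have hqn : q ≠ -(n + 1) := by
      have : (N : ℚ) ≤ n := by exact_mod_cast hn
      intro h
      linarith
    refine (Bool.eq_iff_iff.2 ((embed_fst_apply (approx g n) q).trans ?_)).symm
    simp only [approx, mem_insert_iff, hqn, false_or, mem_ofPred_eq, hq, and_true]
  · filter_upwards [eventually_neg_notMem t] with n hn
    exact (Bool.eq_false_iff.2 fun h => hn (((embed_snd_apply _ t).1 h).1 (mem_insert _ _))).symm

theorem closure_range_embed :
    closure (range embed) = range embed ∪ {p | p.2 = fun _ => false} := by
  refine Subset.antisymm (fun p hp => or_iff_not_imp_right.2 fun h => ?_)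
    (union_subset subset_closure fun p (hp : p.2 = _) => ?_)
  · obtain ⟨t, ht⟩ : ∃ t, p.2 t = true := by simpa [funext_iff] using h
    -- near `p` the image of `embed` is the image of the compact set `Iic t`
    have hcl : closure ({q : Cube | q.2 t = true} ∩ range embed) = embed '' Iic t := by
      rw [← image_preimage_eq_inter_range, preimage_embed_setOf_snd_true]
      exact ((isCompact_Iic t).image continuous_embed).isClosed.closure_eq
    obtain ⟨s, -, rfl⟩ := hcl ▸ (isOpen_setOf_snd_apply t true).inter_closure ⟨ht, hp⟩
    exact mem_range_self s
  · rw [show p = (p.1, fun _ => false) from Prod.ext rfl hp]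
    exact mem_closure_of_tendsto (tendsto_embed_approx p.1) (.of_forall fun n => mem_range_self _)


def K₀ : Set Cube := closure (range embed)

instance : CompactSpace K₀ := isCompact_iff_compactSpace.1 isClosed_closure.isCompact

noncomputable def toK₀ (s : wQ) : K₀ := ⟨embed s, subset_closure (mem_range_self s)⟩

theorem isEmbedding_toK₀ : IsEmbedding toK₀ := isEmbedding_embed.codRestrict _ _

theorem denseRange_toK₀ : DenseRange toK₀ :=
  ((denseRange_inclusion_iff subset_closure).2 subset_rfl).comp
    rangeFactorization_surjective.denseRange (continuous_inclusion subset_closure)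

theorem compl_range_toK₀ : (range toK₀)ᶜ = {k : K₀ | (k : Cube).2 = fun _ => false} := by
  ext ⟨p, hp⟩
  rw [K₀, closure_range_embed] at hp
  refine ⟨fun h => hp.resolve_left fun ⟨s, hs⟩ => h ⟨s, Subtype.ext hs⟩, ?_⟩
  rintro (h : p.2 = _) ⟨s, hs⟩
  have hss := (embed_snd_apply s s).2 le_rfl
  rw [show embed s = p from congrArg Subtype.val hs, h] at hss
  exact Bool.false_ne_true hss

noncomputable def remainderHomeomorph : ↥(range toK₀)ᶜ ≃ₜ (ℚ → Bool) where
  toFun k := k.1.1.1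
  invFun g := ⟨⟨(g, fun _ => false), by rw [K₀, closure_range_embed]; exact Or.inr rfl⟩, by
    rw [compl_range_toK₀]
    rfl⟩
  left_inv := fun ⟨⟨p, hp⟩, hc⟩ => by
    rw [compl_range_toK₀] at hc
    exact Subtype.ext (Subtype.ext (Prod.ext rfl (hc : p.2 = _).symm))
  right_inv _ := rfl
  continuous_toFun := continuous_fst.comp (continuous_subtype_val.comp continuous_subtype_val)
  continuous_invFun := by fun_prop

theorem nFibered_two_K₀ : NFibered 2 K₀ := by
  refine .two_of_injOn (f := fun k : K₀ => (k : Cube).1) (R := range toK₀)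
    (continuous_fst.comp continuous_subtype_val) ?_ fun k hk k' hk' h => ?_
  · rintro _ ⟨s, rfl⟩ _ ⟨t, rfl⟩ h
    exact congrArg toK₀ (injective_fst_embed h)
  · rw [compl_range_toK₀] at hk hk'
    exact Subtype.ext (Prod.ext h (hk.trans hk'.symm))

def code (p : Cube) : (ℚ → Bool) ⊕ ℕ → Bool :=
  Sum.elim (fun x => p.2 (wfPrefix (x ⁻¹' {true}))) fun n => p.1 ((Denumerable.eqv ℚ).symm n)

theorem continuous_code : Continuous code := by
  refine continuous_pi fun z => ?_
  rcases z with x | n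
  · exact (continuous_apply (wfPrefix (x ⁻¹' {true}))).comp continuous_snd
  · exact (continuous_apply ((Denumerable.eqv ℚ).symm n)).comp continuous_fst

theorem injective_code : Function.Injective code := fun p p' h => Prod.ext
  (funext fun q => by
    simpa only [code, Sum.elim_inr, Equiv.symm_apply_apply] using
      congrFun h (.inr (Denumerable.eqv ℚ q)))
  (funext fun t => by
    simpa [code, preimage_boolIndicator_true, wfPrefix_val] using
      congrFun h (.inl t.1.boolIndicator))

theorem isClosed_setOf_code {p : Cube} (hp : p ∈ K₀) : IsClosed {z | code p z = true} := by
  refine isClosed_sum_iff.2 ⟨?_, isClosed_discrete _⟩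
  rw [K₀, closure_range_embed] at hp
  rcases hp with ⟨s, rfl⟩ | (hp : p.2 = _)
  · convert isClosed_setOf_qInitSeg s.1 using 1
    exact Set.ext fun x => (embed_snd_apply _ _).trans le_wfPrefix_iff
  · convert isClosed_empty
    exact Set.ext fun x => by simp [code, hp]

theorem isRosenthal_K₀ : IsRosenthal K₀ := by
  -- without this hint, instance search does not find `PolishSpace ((ℚ → Bool) ⊕ ℕ)`
  have : TopologicalSpace.SeparableSpace ((ℚ → Bool) ⊕ ℕ) := inferInstance
  exact .of_isClosed_setOf (c := fun k : K₀ => code k) (continuous_code.comp continuous_subtype_val)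
    (injective_code.comp Subtype.val_injective) fun k => isClosed_setOf_code k.2

end wQ

/-- There exists a `2`-fibered Rosenthal compactification `K₀` of the tree `wℚ` whose
remainder is homeomorphic to the Cantor set. -/
theorem exists_twoFibered_rosenthal_compactification_wQ :
    ∃ (K : Type) (_ : TopologicalSpace K) (_ : T2Space K) (_ : CompactSpace K)
      (e : wQ → K), IsEmbedding e ∧ Dense (Set.range e) ∧ NFibered 2 K ∧ IsRosenthal K ∧
      Nonempty (↥((Set.range e)ᶜ) ≃ₜ (ℕ → Bool)) :=
  ⟨wQ.K₀, inferInstance, inferInstance, inferInstance, wQ.toK₀, wQ.isEmbedding_toK₀,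
    wQ.denseRange_toK₀, wQ.nFibered_two_K₀, wQ.isRosenthal_K₀,
    ⟨wQ.remainderHomeomorph.trans
      (Homeomorph.piCongrLeft (Y := fun _ => Bool) (Denumerable.eqv ℚ))⟩⟩
end
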